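/- Let q ≠ 1 be an integer. If a group G contains two elements a, b of infinite order satisfying b·a·b⁻¹ = a^q, then G contains a subgroup isomorphic to BS(1,q). -/

import Mathlib

/-- Relators of the Baumslag–Solitar group BS(1,q) = ⟨a, b ∣ b a b⁻¹ = a^q⟩,
with `a = FreeGroup.of false` and `b = FreeGroup.of true`. -/
def BSrels (q : ℤ) : Set (FreeGroup Bool) :=
  {FreeGroup.of true * FreeGroup.of false * (FreeGroup.of true)⁻¹ * (FreeGroup.of false) ^ (-q)}

/-- The Baumslag–Solitar group BS(1,q). -/
def BS (q : ℤ) : Type := PresentedGroup (BSrels q)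

instance (q : ℤ) : Group (BS q) := by unfold BS; infer_instance

/-- The generator `a` of BS(1,q). -/
def BSa (q : ℤ) : BS q := PresentedGroup.of false

/-- The generator `b` of BS(1,q). -/
def BSb (q : ℤ) : BS q := PresentedGroup.of true

/-!
Map `BS(1,q)` to `G` by `a ↦ a`, `b ↦ b`; the image is `⟨a, b⟩`, so it suffices that this map is
injective. Using `b aᵐ b⁻¹ = a^(q m)`, every element of `BS(1,q)` (indeed of any group generated
by such a pair) can be written as `b⁻ⁱ aᵐ bʲ` with `i, j ≥ 0`. If such a word becomes trivial in
`G`, then `aᵐ = bⁱ⁻ʲ` is fixed by conjugation with `b`, so `a^((q-1) m) = 1`; hence `m = 0`, and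
then `bⁱ = bʲ` gives `i = j`.
-/

section Relation

variable {G : Type*} [Group G] {q : ℤ} {a b : G}

theorem pow_mul_zpow_mul_inv_pow_of_conj (hab : b * a * b⁻¹ = a ^ q) (k : ℕ) (m : ℤ) :
    b ^ k * a ^ m * (b ^ k)⁻¹ = a ^ (q ^ k * m) := by
  induction k with
  | zero => simp
  | succ k ih =>
    calc b ^ (k + 1) * a ^ m * (b ^ (k + 1))⁻¹
        = b * (b ^ k * a ^ m * (b ^ k)⁻¹) * b⁻¹ := by rw [pow_succ']; group
      _ = (b * a * b⁻¹) ^ (q ^ k * m) := by rw [ih, conj_zpow]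
      _ = a ^ (q ^ (k + 1) * m) := by rw [hab, ← zpow_mul, pow_succ']; ring_nf

theorem zpow_mul_inv_pow_of_conj (hab : b * a * b⁻¹ = a ^ q) (k : ℕ) (m : ℤ) :
    a ^ m * (b ^ k)⁻¹ = (b ^ k)⁻¹ * a ^ (q ^ k * m) := by
  rw [← pow_mul_zpow_mul_inv_pow_of_conj hab]; group

theorem mul_zpow_of_conj (hab : b * a * b⁻¹ = a ^ q) (m : ℤ) :
    b * a ^ m = a ^ (q * m) * b := by
  rw [zpow_mul, ← hab, conj_zpow]; group

theorem zpow_mul_zpow_inv_pow_mul_pow (hab : b * a * b⁻¹ = a ^ q) (n : ℤ) (i j : ℕ) (m : ℤ) :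
    a ^ n * ((b ^ i)⁻¹ * a ^ m * b ^ j) = (b ^ i)⁻¹ * a ^ (q ^ i * n + m) * b ^ j := by
  calc a ^ n * ((b ^ i)⁻¹ * a ^ m * b ^ j) = a ^ n * (b ^ i)⁻¹ * a ^ m * b ^ j := by group
    _ = (b ^ i)⁻¹ * a ^ (q ^ i * n) * a ^ m * b ^ j := by rw [zpow_mul_inv_pow_of_conj hab]
    _ = (b ^ i)⁻¹ * a ^ (q ^ i * n + m) * b ^ j := by rw [zpow_add]; group

theorem exists_eq_inv_pow_mul_zpow_mul_pow (hab : b * a * b⁻¹ = a ^ q) {g : G}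
    (hg : g ∈ Subgroup.closure {a, b}) :
    ∃ (i j : ℕ) (m : ℤ), g = (b ^ i)⁻¹ * a ^ m * b ^ j := by
  induction hg using Subgroup.closure_induction_left with
  | one => exact ⟨0, 0, 0, by simp⟩
  | mul_left x hx g _ ih =>
    obtain ⟨i, j, m, rfl⟩ := ih
    rcases hx with hx | hx <;> subst x
    · exact ⟨i, j, q ^ i + m, by simpa using zpow_mul_zpow_inv_pow_mul_pow hab 1 i j m⟩
    · cases i with
      | zero =>
        refine ⟨0, j + 1, q * m, ?_⟩
        rw [pow_zero, inv_one, one_mul, one_mul, ← mul_assoc, mul_zpow_of_conj hab, pow_succ']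
        group
      | succ i => exact ⟨i, j, m, by rw [pow_succ]; group⟩
  | inv_mul_cancel x hx g _ ih =>
    obtain ⟨i, j, m, rfl⟩ := ih
    rcases hx with hx | hx <;> subst x
    · exact ⟨i, j, -q ^ i + m, by simpa using zpow_mul_zpow_inv_pow_mul_pow hab (-1) i j m⟩
    · exact ⟨i + 1, j, m, by rw [pow_succ]; group⟩

theorem inv_pow_mul_zpow_mul_pow_eq_one (hq : q ≠ 1) (ha : ¬IsOfFinOrder a)
    (hb : ¬IsOfFinOrder b) (hab : b * a * b⁻¹ = a ^ q) {i j : ℕ} {m : ℤ}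
    (h : (b ^ i)⁻¹ * a ^ m * b ^ j = 1) : m = 0 ∧ i = j := by
  have ham : a ^ m = b ^ i * (b ^ j)⁻¹ :=
    calc a ^ m = b ^ i * ((b ^ i)⁻¹ * a ^ m * b ^ j) * (b ^ j)⁻¹ := by group
      _ = b ^ i * (b ^ j)⁻¹ := by rw [h, mul_one]
  have hfix : a ^ (q * m) = a ^ m := by
    rw [zpow_mul, ← hab, conj_zpow, ham]; group
  have hm : m = 0 := by
    have := injective_zpow_iff_not_isOfFinOrder.mpr ha hfix
    have : (q - 1) * m = 0 := by linarith
    exact (mul_eq_zero.mp this).resolve_left (sub_ne_zero.mpr hq)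
  refine ⟨hm, injective_pow_iff_not_isOfFinOrder.mpr hb ?_⟩
  rw [hm, zpow_zero, eq_comm, mul_inv_eq_one] at ham
  exact ham

end Relation

namespace BS

theorem conj_BSa (q : ℤ) : BSb q * BSa q * (BSb q)⁻¹ = BSa q ^ q := by
  have h := PresentedGroup.one_of_mem (rels := BSrels q) rfl
  simp only [map_mul, map_inv, map_zpow] at h
  rw [← mul_inv_eq_one, ← zpow_neg]
  exact h

theorem closure_BSa_BSb (q : ℤ) : Subgroup.closure {BSa q, BSb q} = ⊤ := by
  refine eq_top_iff.mpr fun g _ => PresentedGroup.generated_by (BSrels q) _ ?_ g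
  rintro (_ | _)
  · exact Subgroup.subset_closure (Set.mem_insert _ _)
  · exact Subgroup.subset_closure (Set.mem_insert_of_mem _ rfl)

variable {q : ℤ} {G : Type*} [Group G] {a b : G}

def lift (hab : b * a * b⁻¹ = a ^ q) : BS q →* G :=
  PresentedGroup.toGroup (f := fun t => if t then b else a) <| by
    rintro r rfl
    simp [hab]

@[simp]
theorem lift_BSa (hab : b * a * b⁻¹ = a ^ q) : lift hab (BSa q) = a :=
  PresentedGroup.toGroup.of _

@[simp]
theorem lift_BSb (hab : b * a * b⁻¹ = a ^ q) : lift hab (BSb q) = b :=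
  PresentedGroup.toGroup.of _

theorem lift_injective (hq : q ≠ 1) (ha : ¬IsOfFinOrder a) (hb : ¬IsOfFinOrder b)
    (hab : b * a * b⁻¹ = a ^ q) : Function.Injective (lift hab) := by
  refine (injective_iff_map_eq_one _).mpr fun w hw => ?_
  obtain ⟨i, j, m, rfl⟩ :=
    exists_eq_inv_pow_mul_zpow_mul_pow (conj_BSa q) (closure_BSa_BSb q ▸ Subgroup.mem_top w)
  simp only [map_mul, map_inv, map_pow, map_zpow, lift_BSa, lift_BSb] at hw
  obtain ⟨rfl, rfl⟩ := inv_pow_mul_zpow_mul_pow_eq_one hq ha hb hab hw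
  group

end BS

theorem stmt18 {q : ℤ} (hq : q ≠ 1) {G : Type*} [Group G] (a b : G)
    (ha : ¬IsOfFinOrder a) (hb : ¬IsOfFinOrder b) (hrel : b * a * b⁻¹ = a ^ q) :
    ∃ H : Subgroup G, Nonempty (H ≃* BS q) :=
  ⟨(BS.lift hrel).range, ⟨(MonoidHom.ofInjective (BS.lift_injective hq ha hb hrel)).symm⟩⟩
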